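/- arXiv:0808.2960 — 3 statements merged into one kernel-verified Lean document; each statement's English description precedes it below -/
import Mathlib

section
/- Let k ≥ 3, P a nonempty finite set, and nor⁰ defined as: nor⁰(F) = 0 if |P| ≥ ‖F‖·k^(3^k−1), else k − log₃(log_k(k·|P|/‖F‖)). If F : P → [0,1] is not identically zero and F' ≤ F pointwise with ‖F'‖ ≥ ‖F‖/k, then nor⁰(F') ≥ nor⁰(F) − 1. -/
/-!
Both norms are read off the level `x = log_k (k|P|/‖F‖)`: `nor⁰(F) = 0` exactly when `x ≥ 3^k`,
and otherwise `nor⁰(F) = k - log₃ x`. Passing from `F` to `F'` divides `‖F‖` by at most `k`, so it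
raises the level by at most one, and `x + 1 ≤ 3x` because `x ≥ 1`; hence `log₃` of the level rises
by at most one. At the threshold `3^k` the same bound `3^k - 1 ≥ 3^(k-1)` shows that the jump of
`nor⁰` between the two cases of its definition is also at most one.
-/

open Finset

/-- The creature norm nor⁰ with parameter k on weight functions F : P → [0,1]. -/
noncomputable def nor0 (k : ℕ) {P : Type*} [Fintype P] (F : P → ℝ) : ℝ :=
  if (Fintype.card P : ℝ) ≥ (∑ h, F h) * (k : ℝ) ^ (3 ^ k - 1) then 0
  else (k : ℝ) - Real.logb 3 (Real.logb k ((k : ℝ) * (Fintype.card P : ℝ) / ∑ h, F h))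

open Real

noncomputable def nor0Profile (k : ℕ) (x : ℝ) : ℝ :=
  if (3 : ℝ) ^ k ≤ x then 0 else k - logb 3 x

theorem nor0Profile_sub_one_le {k : ℕ} (hk : 1 ≤ k) {x x' : ℝ} (hx : 1 ≤ x) (hx' : 0 < x')
    (hxx' : x' ≤ x + 1) : nor0Profile k x - 1 ≤ nor0Profile k x' := by
  have h3k : (3 : ℝ) ≤ 3 ^ k := by simpa using pow_le_pow_right₀ (by norm_num : (1 : ℝ) ≤ 3) hk
  unfold nor0Profile
  split_ifs with hbig hbig'
  · norm_num
  · have : logb 3 x' < k := by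
      rw [logb_lt_iff_lt_rpow (by norm_num) hx', rpow_natCast]
      exact not_le.1 hbig'
    linarith
  · have : (k : ℝ) - 1 ≤ logb 3 x := by
      rw [le_logb_iff_rpow_le (by norm_num) (by linarith), rpow_sub (by norm_num), rpow_natCast,
        rpow_one]
      linarith
    linarith
  · have : logb 3 x' ≤ logb 3 x + 1 := by
      calc logb 3 x' ≤ logb 3 (3 * x) := logb_le_logb_of_le (by norm_num) hx' (by linarith)
        _ = logb 3 x + 1 := by
          rw [logb_mul (by norm_num) (by positivity), logb_self_eq_one (by norm_num), add_comm]
    linarith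

theorem mul_pow_pred_le_iff_le_logb {b s n : ℝ} (hb : 1 < b) (hs : 0 < s) (hn : 0 < n) {m : ℕ}
    (hm : 1 ≤ m) : s * b ^ (m - 1) ≤ n ↔ (m : ℝ) ≤ logb b (b * n / s) := by
  have hbm : b ^ m = b * b ^ (m - 1) := by rw [← pow_succ', Nat.sub_add_cancel hm]
  rw [le_logb_iff_rpow_le hb (by positivity), rpow_natCast, le_div_iff₀ hs, hbm, mul_assoc,
    mul_le_mul_iff_right₀ (by linarith), mul_comm]

theorem one_le_logb_mul_div {b s n : ℝ} (hb : 1 < b) (hs : 0 < s) (hsn : s ≤ n) :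
    1 ≤ logb b (b * n / s) := by
  have hn : 0 < n := hs.trans_le hsn
  rw [le_logb_iff_rpow_le hb (by positivity), rpow_one, le_div_iff₀ hs]
  exact mul_le_mul_of_nonneg_left hsn (by linarith)

theorem logb_mul_div_le_add_one {b s s' n : ℝ} (hb : 1 < b) (hs : 0 < s) (hs' : 0 < s')
    (hn : 0 < n) (hss' : s ≤ b * s') : logb b (b * n / s') ≤ logb b (b * n / s) + 1 := by
  calc logb b (b * n / s') ≤ logb b (b * n / s * b) := by
        refine logb_le_logb_of_le hb (by positivity) ?_
        rw [div_mul_eq_mul_div, div_le_div_iff₀ hs' hs]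
        have := mul_le_mul_of_nonneg_left hss' (by positivity : 0 ≤ b * n)
        linarith
    _ = logb b (b * n / s) + 1 := by
        rw [logb_mul (by positivity) (by positivity), logb_self_eq_one hb]

theorem nor0_eq_nor0Profile {k : ℕ} (hk : 1 < k) {P : Type*} [Fintype P] {F : P → ℝ}
    (hF : 0 < ∑ h, F h) :
    nor0 k F = nor0Profile k (logb k (k * Fintype.card P / ∑ h, F h)) := by
  have hP : (0 : ℝ) < Fintype.card P := by
    obtain ⟨i, -, -⟩ := exists_ne_zero_of_sum_ne_zero hF.ne'
    exact_mod_cast Fintype.card_pos_iff.2 ⟨i⟩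
  have hthreshold := mul_pow_pred_le_iff_le_logb (by exact_mod_cast hk : (1 : ℝ) < k) hF hP
    (Nat.one_le_pow k 3 three_pos)
  simp only [nor0, nor0Profile, ge_iff_le, hthreshold, Nat.cast_pow, Nat.cast_ofNat]

theorem nor0_bigness_general (k : ℕ) (hk : 3 ≤ k) {P : Type*} [Fintype P]
    (F F' : P → ℝ)
    (hF : ∀ h, F h ∈ Set.Icc (0:ℝ) 1)
    (hz : ∃ h, F h ≠ 0)
    (hle : ∀ h, F' h ≤ F h)
    (hsum : (∑ h, F h) / (k : ℝ) ≤ ∑ h, F' h) :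
    nor0 k F - 1 ≤ nor0 k F' := by
  have hk1 : (1 : ℝ) < k := by exact_mod_cast (by omega : 1 < k)
  have hS : 0 < ∑ h, F h := by
    obtain ⟨i, hi⟩ := hz
    exact sum_pos' (fun j _ => (hF j).1) ⟨i, mem_univ i, (hF i).1.lt_of_ne' hi⟩
  have hSN : ∑ h, F h ≤ Fintype.card P := by
    simpa using sum_le_card_nsmul univ F 1 fun j _ => (hF j).2
  have hSS' : ∑ h, F h ≤ k * ∑ h, F' h := (div_le_iff₀' (by linarith)).1 hsum
  have hS' : 0 < ∑ h, F' h := pos_of_mul_pos_right (hS.trans_le hSS') (by linarith)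
  have hS'N : ∑ h, F' h ≤ Fintype.card P := (sum_le_sum fun j _ => hle j).trans hSN
  rw [nor0_eq_nor0Profile (by omega) hS, nor0_eq_nor0Profile (by omega) hS']
  exact nor0Profile_sub_one_le (by omega) (one_le_logb_mul_div hk1 hS hSN)
    (one_pos.trans_le (one_le_logb_mul_div hk1 hS' hS'N))
    (logb_mul_div_le_add_one hk1 hS hS' (hS.trans_le hSN) hSS')

theorem nor0_bigness (k : ℕ) (hk : 3 ≤ k) {P : Type*} [Fintype P] [Nonempty P]
    (F F' : P → ℝ)
    (hF : ∀ h, F h ∈ Set.Icc (0:ℝ) 1) (hF' : ∀ h, F' h ∈ Set.Icc (0:ℝ) 1)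
    (hz : ∃ h, F h ≠ 0) (hz' : ∃ h, F' h ≠ 0)
    (hle : ∀ h, F' h ≤ F h)
    (hsum : (∑ h, F h) / (k : ℝ) ≤ ∑ h, F' h) :
    nor0 k F - 1 ≤ nor0 k F' :=
  nor0_bigness_general k hk F F' hF hz hle hsum
end

section
/- Let P₀, K₁, K₂ be nonempty finite sets, a ∈ (0,1]. For ℓ = 1,2 let Fℓ : P₀ × Kℓ → [0,1] with Σ Fℓ ≥ a·|P₀|·|Kℓ|, and suppose that for every h ∈ P₀: (Σ_{e∈K₁} F₁(h,e))/|K₁| = (Σ_{e∈K₂} F₂(h,e))/|K₂|. Define F : P₀ × K₁ × K₂ → [0,1] by F(h,e₁,e₂) = F₁(h,e₁)·F₂(h,e₂). Then Σ F ≥ (a³/8)·|P₀|·|K₁|·|K₂|. -/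
/-!
Writing `m h` for the common fiberwise average of `F₁` and `F₂` over `h`, the triple sum factors
fiberwise as `|K₁| |K₂| ∑ₕ (m h)²`. The mass condition on `F₁` says `∑ₕ m h ≥ a |P₀|`, so
Cauchy–Schwarz gives `∑ₕ (m h)² ≥ a² |P₀|`, and `a² ≥ a³ / 8` for `0 ≤ a ≤ 1`.
-/

open Finset

theorem sq_mul_card_le_sum_sq {ι : Type*} (s : Finset ι) (f : ι → ℝ) {c : ℝ} (hc : 0 ≤ c)
    (h : c * #s ≤ ∑ i ∈ s, f i) : c ^ 2 * #s ≤ ∑ i ∈ s, f i ^ 2 := by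
  rcases (Nat.cast_nonneg #s : (0 : ℝ) ≤ #s).eq_or_lt with hs | hs
  · rw [← hs, mul_zero]
    positivity
  · have hsq : (c * #s) ^ 2 ≤ #s * ∑ i ∈ s, f i ^ 2 :=
      (pow_le_pow_left₀ (by positivity) h 2).trans sq_sum_le_card_mul_sum_sq
    refine le_of_mul_le_mul_left ?_ hs
    linarith

section Fiberwise

variable {P K K₁ K₂ : Type*} [Fintype K] [Fintype K₁] [Fintype K₂]

noncomputable def fiberAverage (F : P × K → ℝ) (h : P) : ℝ :=
  (∑ e, F (h, e)) / Fintype.card K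

theorem sum_fiberAverage [Fintype P] (F : P × K → ℝ) :
    ∑ h, fiberAverage F h = (∑ p, F p) / Fintype.card K := by
  rw [Fintype.sum_prod_type, sum_div]
  rfl

theorem sum_fiber_eq_card_mul_fiberAverage [Nonempty K] (F : P × K → ℝ) (h : P) :
    ∑ e, F (h, e) = Fintype.card K * fiberAverage F h := by
  rw [fiberAverage, mul_div_cancel₀ _ (by positivity)]

theorem sum_fiber_mul_eq_of_fiberAverage_eq [Fintype P] [Nonempty K₁] [Nonempty K₂]
    (F₁ : P × K₁ → ℝ) (F₂ : P × K₂ → ℝ) (hbal : ∀ h, fiberAverage F₁ h = fiberAverage F₂ h) :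
    ∑ h, ∑ e₁, ∑ e₂, F₁ (h, e₁) * F₂ (h, e₂)
      = Fintype.card K₁ * Fintype.card K₂ * ∑ h, fiberAverage F₁ h ^ 2 := by
  rw [mul_sum]
  refine sum_congr rfl fun h _ => ?_
  rw [← sum_mul_sum, sum_fiber_eq_card_mul_fiberAverage F₁, sum_fiber_eq_card_mul_fiberAverage F₂,
    ← hbal]
  ring

theorem sq_mul_card_le_sum_fiber_mul_of_fiberAverage_eq [Fintype P] [Nonempty K₁] [Nonempty K₂]
    (F₁ : P × K₁ → ℝ) (F₂ : P × K₂ → ℝ) (hbal : ∀ h, fiberAverage F₁ h = fiberAverage F₂ h)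
    {a : ℝ} (ha : 0 ≤ a) (hmass : a * (Fintype.card P * Fintype.card K₁) ≤ ∑ p, F₁ p) :
    a ^ 2 * (Fintype.card P * Fintype.card K₁ * Fintype.card K₂)
      ≤ ∑ h, ∑ e₁, ∑ e₂, F₁ (h, e₁) * F₂ (h, e₂) := by
  have havg : a * Fintype.card P ≤ ∑ h, fiberAverage F₁ h := by
    rw [sum_fiberAverage, le_div_iff₀ (by positivity)]
    linarith
  have hsq := sq_mul_card_le_sum_sq univ (fiberAverage F₁) ha havg
  rw [card_univ] at hsq
  rw [sum_fiber_mul_eq_of_fiberAverage_eq F₁ F₂ hbal]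
  calc a ^ 2 * (Fintype.card P * Fintype.card K₁ * Fintype.card K₂)
      = Fintype.card K₁ * Fintype.card K₂ * (a ^ 2 * Fintype.card P) := by ring
    _ ≤ _ := by gcongr

end Fiberwise

theorem balanced_product_norm_general {P₀ K₁ K₂ : Type*}
    [Fintype P₀] [Fintype K₁] [Fintype K₂]
    [Nonempty K₁] [Nonempty K₂]
    (a : ℝ) (ha : a ∈ Set.Ioc (0:ℝ) 1)
    (F₁ : P₀ × K₁ → ℝ) (F₂ : P₀ × K₂ → ℝ)
    (hs₁ : a * ((Fintype.card P₀ : ℝ) * (Fintype.card K₁ : ℝ)) ≤ ∑ p, F₁ p)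
    (hbal : ∀ h : P₀,
      (∑ e, F₁ (h, e)) / (Fintype.card K₁ : ℝ) = (∑ e, F₂ (h, e)) / (Fintype.card K₂ : ℝ)) :
    (a ^ 3 / 8) * ((Fintype.card P₀ : ℝ) * (Fintype.card K₁ : ℝ) * (Fintype.card K₂ : ℝ))
      ≤ ∑ h, ∑ e₁, ∑ e₂, F₁ (h, e₁) * F₂ (h, e₂) := by
  obtain ⟨ha₀, ha₁⟩ := ha
  have hcoeff : a ^ 3 / 8 ≤ a ^ 2 := by nlinarith
  calc (a ^ 3 / 8) * ((Fintype.card P₀ : ℝ) * Fintype.card K₁ * Fintype.card K₂)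
      ≤ a ^ 2 * ((Fintype.card P₀ : ℝ) * Fintype.card K₁ * Fintype.card K₂) := by gcongr
    _ ≤ _ := sq_mul_card_le_sum_fiber_mul_of_fiberAverage_eq F₁ F₂ hbal ha₀.le hs₁

theorem balanced_product_norm {P₀ K₁ K₂ : Type*}
    [Fintype P₀] [Fintype K₁] [Fintype K₂]
    [Nonempty P₀] [Nonempty K₁] [Nonempty K₂]
    (a : ℝ) (ha : a ∈ Set.Ioc (0:ℝ) 1)
    (F₁ : P₀ × K₁ → ℝ) (F₂ : P₀ × K₂ → ℝ)
    (hF₁ : ∀ p, F₁ p ∈ Set.Icc (0:ℝ) 1) (hF₂ : ∀ p, F₂ p ∈ Set.Icc (0:ℝ) 1)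
    (hs₁ : a * ((Fintype.card P₀ : ℝ) * (Fintype.card K₁ : ℝ)) ≤ ∑ p, F₁ p)
    (hs₂ : a * ((Fintype.card P₀ : ℝ) * (Fintype.card K₂ : ℝ)) ≤ ∑ p, F₂ p)
    (hbal : ∀ h : P₀,
      (∑ e, F₁ (h, e)) / (Fintype.card K₁ : ℝ) = (∑ e, F₂ (h, e)) / (Fintype.card K₂ : ℝ)) :
    (a ^ 3 / 8) * ((Fintype.card P₀ : ℝ) * (Fintype.card K₁ : ℝ) * (Fintype.card K₂ : ℝ))
      ≤ ∑ h, ∑ e₁, ∑ e₂, F₁ (h, e₁) * F₂ (h, e₂) :=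
  balanced_product_norm_general a ha F₁ F₂ hs₁ hbal
end

section
/- Let K₁, K₂ be nonempty finite sets of equal cardinality k, S a finite set, and for ℓ = 1,2 let Fℓ : Kℓ → [0,1] with ‖F₁‖ = ‖F₂‖ > 0, and Hℓ : Kℓ → S. Then there exist F′ℓ ≤ Fℓ with ‖F′ℓ‖ ≥ ‖Fℓ‖/4 and ‖F′₁‖ = ‖F′₂‖ such that either (i) for all h₁ with F′₁(h₁) > 0 and h₂ with F′₂(h₂) > 0 we have H₁(h₁) ≠ H₂(h₂), or (ii) there is s ∈ S with H₁(h₁) = s = H₂(h₂) whenever F′₁(h₁) > 0 and F′₂(h₂) > 0. -/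
open Finset

/-- Greedy/minimal-cardinality helper: inside a set `V` where `b ≤ a` pointwise and
`b < T/4` pointwise, if the `a`-mass of `V` is at least `T/4`, one can find `W ⊆ V`
with `a`-mass at least `T/4` and `b`-mass less than `T/2`. -/
private lemma shrink_helper {S : Type*} [Fintype S] [DecidableEq S]
    (a b : S → ℝ) (T : ℝ) (hT : 0 < T)
    (hb0 : ∀ s, 0 ≤ b s)
    (V : Finset S) (hab : ∀ s ∈ V, b s ≤ a s) (hbV : ∀ s ∈ V, b s < T / 4)
    (hVa : T / 4 ≤ ∑ s ∈ V, a s) :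
    ∃ W ⊆ V, T / 4 ≤ ∑ s ∈ W, a s ∧ ∑ s ∈ W, b s < T / 2 := by
  obtain ⟨W, hWmem, hWmin⟩ := Finset.exists_min_image
    ((V.powerset).filter fun W => T / 4 ≤ ∑ s ∈ W, a s) Finset.card
    ⟨V, by simp [hVa]⟩
  simp only [mem_filter, mem_powerset] at hWmem
  obtain ⟨hWV, hWa⟩ := hWmem
  have hWne : W.Nonempty := by
    rcases W.eq_empty_or_nonempty with h | h
    · exfalso; rw [h] at hWa; simp at hWa; linarith
    · exact h
  obtain ⟨t, ht⟩ := hWne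
  have herase : ∑ s ∈ W.erase t, a s < T / 4 := by
    by_contra hc
    push_neg at hc
    have h1 := hWmin (W.erase t)
      (by
        simp only [mem_filter, mem_powerset]
        exact ⟨(Finset.erase_subset _ _).trans hWV, hc⟩)
    have h2 : (W.erase t).card < W.card := Finset.card_erase_lt_of_mem ht
    omega
  refine ⟨W, hWV, hWa, ?_⟩
  have hsplit : ∑ s ∈ W.erase t, b s + b t = ∑ s ∈ W, b s :=
    Finset.sum_erase_add _ _ ht
  have hle : ∑ s ∈ W.erase t, b s ≤ ∑ s ∈ W.erase t, a s :=
    Finset.sum_le_sum fun s hs => hab s (hWV (Finset.mem_of_mem_erase hs))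
  have hbt : b t < T / 4 := hbV t (hWV ht)
  linarith

/-- Key combinatorial lemma: either some colour carries mass `≥ T/4` on both sides,
or the colours can be split into `W` and `Wᶜ` with `a`-mass of `W` and `b`-mass of `Wᶜ`
both at least `T/4`. -/
private lemma shrink_key {S : Type*} [Fintype S] [DecidableEq S]
    (a b : S → ℝ) (ha0 : ∀ s, 0 ≤ a s) (hb0 : ∀ s, 0 ≤ b s)
    (T : ℝ) (hTa : ∑ s, a s = T) (hTb : ∑ s, b s = T) (hT : 0 < T) :
    (∃ s, T / 4 ≤ a s ∧ T / 4 ≤ b s) ∨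
    ∃ W : Finset S, T / 4 ≤ ∑ s ∈ W, a s ∧ T / 4 ≤ ∑ s ∈ Wᶜ, b s := by
  by_cases hbig : ∃ s, T / 4 ≤ a s ∧ T / 4 ≤ b s
  · exact Or.inl hbig
  push_neg at hbig
  right
  set V : Finset S := Finset.univ.filter (fun s => b s ≤ a s) with hV
  set V' : Finset S := Finset.univ.filter (fun s => ¬ b s ≤ a s) with hV'
  have haV : ∑ s ∈ V, a s + ∑ s ∈ V', a s = T := by
    rw [hV, hV', Finset.sum_filter_add_sum_filter_not, hTa]
  have hbV : ∑ s ∈ V, b s + ∑ s ∈ V', b s = T := by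
    rw [hV, hV', Finset.sum_filter_add_sum_filter_not, hTb]
  have hVba : ∀ s ∈ V, b s ≤ a s := fun s hs => (Finset.mem_filter.1 hs).2
  have hV'ab : ∀ s ∈ V', a s < b s := fun s hs =>
    lt_of_not_ge (Finset.mem_filter.1 hs).2
  have hVbsmall : ∀ s ∈ V, b s < T / 4 := by
    intro s hs
    rcases lt_or_ge (a s) (T / 4) with h | h
    · exact lt_of_le_of_lt (hVba s hs) h
    · exact hbig s h
  have hV'asmall : ∀ s ∈ V', a s < T / 4 := by
    intro s hs
    rcases lt_or_ge (a s) (T / 4) with h | h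
    · exact h
    · exact lt_trans (hV'ab s hs) (hbig s h)
  have hbVle : ∑ s ∈ V, b s ≤ ∑ s ∈ V, a s := Finset.sum_le_sum hVba
  rcases le_or_gt (T / 2) (∑ s ∈ V, a s) with hcase | hcase
  · -- a-mass concentrated on V
    obtain ⟨W, hWV, hWa, hWb⟩ := shrink_helper a b T hT hb0 V hVba hVbsmall
      (by linarith)
    refine ⟨W, hWa, ?_⟩
    have hcompl : ∑ s ∈ W, b s + ∑ s ∈ Wᶜ, b s = T := by
      rw [Finset.sum_add_sum_compl, hTb]
    linarith
  · -- b-mass concentrated on V'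
    have hV'b : T / 2 ≤ ∑ s ∈ V', b s := by
      have h1 : ∑ s ∈ V', a s ≤ ∑ s ∈ V', b s :=
        Finset.sum_le_sum fun s hs => le_of_lt (hV'ab s hs)
      linarith
    obtain ⟨W', hW'V, hW'b, hW'a⟩ := shrink_helper b a T hT ha0 V'
      (fun s hs => le_of_lt (hV'ab s hs)) hV'asmall (by linarith)
    refine ⟨W'ᶜ, ?_, ?_⟩
    · have hcompl : ∑ s ∈ W', a s + ∑ s ∈ W'ᶜ, a s = T := by
        rw [Finset.sum_add_sum_compl, hTa]
      linarith
    · rw [compl_compl]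
      exact hW'b

theorem disjoint_colour_shrink {K₁ K₂ S : Type*}
    [Fintype K₁] [Fintype K₂] [Fintype S]
    (hcard : Fintype.card K₁ = Fintype.card K₂)
    (F₁ : K₁ → ℝ) (F₂ : K₂ → ℝ)
    (hF₁ : ∀ h, F₁ h ∈ Set.Icc (0:ℝ) 1) (hF₂ : ∀ h, F₂ h ∈ Set.Icc (0:ℝ) 1)
    (hsum : ∑ h, F₁ h = ∑ h, F₂ h) (hpos : 0 < ∑ h, F₁ h)
    (H₁ : K₁ → S) (H₂ : K₂ → S) :
    ∃ (F₁' : K₁ → ℝ) (F₂' : K₂ → ℝ),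
      (∀ h, 0 ≤ F₁' h ∧ F₁' h ≤ F₁ h) ∧
      (∀ h, 0 ≤ F₂' h ∧ F₂' h ≤ F₂ h) ∧
      (∑ h, F₁ h) / 4 ≤ (∑ h, F₁' h) ∧
      (∑ h, F₂ h) / 4 ≤ (∑ h, F₂' h) ∧
      (∑ h, F₁' h) = (∑ h, F₂' h) ∧
      ((∀ h₁ h₂, 0 < F₁' h₁ → 0 < F₂' h₂ → H₁ h₁ ≠ H₂ h₂) ∨
       (∃ s : S, ∀ h₁ h₂, 0 < F₁' h₁ → 0 < F₂' h₂ → H₁ h₁ = s ∧ H₂ h₂ = s)) := by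
  classical
  set T : ℝ := ∑ h, F₁ h with hTdef
  set a : S → ℝ := fun s => ∑ h ∈ Finset.univ.filter (fun h => H₁ h = s), F₁ h with ha
  set b : S → ℝ := fun s => ∑ h ∈ Finset.univ.filter (fun h => H₂ h = s), F₂ h with hb
  have ha0 : ∀ s, 0 ≤ a s := fun s => Finset.sum_nonneg fun h _ => (hF₁ h).1
  have hb0 : ∀ s, 0 ≤ b s := fun s => Finset.sum_nonneg fun h _ => (hF₂ h).1
  have hTa : ∑ s, a s = T :=
    Finset.sum_fiberwise_of_maps_to (fun h _ => Finset.mem_univ _) F₁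
  have hTb : ∑ s, b s = T :=
    (Finset.sum_fiberwise_of_maps_to (fun h _ => Finset.mem_univ _) F₂).trans hsum.symm
  have hsum₂ : ∑ h, F₂ h = T := hsum.symm
  rcases shrink_key a b ha0 hb0 T hTa hTb hpos with ⟨s, hsa, hsb⟩ | ⟨W, hWa, hWb⟩
  · -- single-colour case
    set m : ℝ := min (a s) (b s) with hm
    have hmT : T / 4 ≤ m := le_min hsa hsb
    have hm0 : 0 < m := lt_of_lt_of_le (by linarith) hmT
    have has : 0 < a s := lt_of_lt_of_le hm0 (min_le_left _ _)
    have hbs : 0 < b s := lt_of_lt_of_le hm0 (min_le_right _ _)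
    refine ⟨fun h => if H₁ h = s then (m / a s) * F₁ h else 0,
            fun h => if H₂ h = s then (m / b s) * F₂ h else 0, ?_, ?_, ?_, ?_, ?_, ?_⟩
    · intro h
      by_cases hh : H₁ h = s
      · simp only [hh, if_true]
        constructor
        · exact mul_nonneg (div_nonneg hm0.le has.le) (hF₁ h).1
        · exact mul_le_of_le_one_left (hF₁ h).1
            ((div_le_one has).2 (min_le_left _ _))
      · simp [hh, (hF₁ h).1]
    · intro h
      by_cases hh : H₂ h = s
      · simp only [hh, if_true]
        constructor
        · exact mul_nonneg (div_nonneg hm0.le hbs.le) (hF₂ h).1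
        · exact mul_le_of_le_one_left (hF₂ h).1
            ((div_le_one hbs).2 (min_le_right _ _))
      · simp [hh, (hF₂ h).1]
    · have : (∑ h, if H₁ h = s then (m / a s) * F₁ h else 0) = m := by
        rw [← Finset.sum_filter, ← Finset.mul_sum]
        show m / a s * a s = m
        exact div_mul_cancel₀ m has.ne'
      rw [this]; exact hmT
    · have : (∑ h, if H₂ h = s then (m / b s) * F₂ h else 0) = m := by
        rw [← Finset.sum_filter, ← Finset.mul_sum]
        show m / b s * b s = m
        exact div_mul_cancel₀ m hbs.ne'
      rw [this, hsum₂]; exact hmT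
    · have h1 : (∑ h, if H₁ h = s then (m / a s) * F₁ h else 0) = m := by
        rw [← Finset.sum_filter, ← Finset.mul_sum]
        show m / a s * a s = m
        exact div_mul_cancel₀ m has.ne'
      have h2 : (∑ h, if H₂ h = s then (m / b s) * F₂ h else 0) = m := by
        rw [← Finset.sum_filter, ← Finset.mul_sum]
        show m / b s * b s = m
        exact div_mul_cancel₀ m hbs.ne'
      rw [h1, h2]
    · right
      refine ⟨s, fun h₁ h₂ hp1 hp2 => ⟨?_, ?_⟩⟩
      · by_contra hh; simp [hh] at hp1
      · by_contra hh; simp [hh] at hp2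
  · -- disjoint-colour case
    set A : ℝ := ∑ s ∈ W, a s with hA
    set B : ℝ := ∑ s ∈ Wᶜ, b s with hB
    have hA0 : 0 < A := lt_of_lt_of_le (by linarith) hWa
    have hB0 : 0 < B := lt_of_lt_of_le (by linarith) hWb
    set m : ℝ := min A B with hm
    have hmT : T / 4 ≤ m := le_min hWa hWb
    have hm0 : 0 < m := lt_of_lt_of_le (by linarith) hmT
    refine ⟨fun h => if H₁ h ∈ W then (m / A) * F₁ h else 0,
            fun h => if H₂ h ∈ Wᶜ then (m / B) * F₂ h else 0, ?_, ?_, ?_, ?_, ?_, ?_⟩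
    · intro h
      by_cases hh : H₁ h ∈ W
      · simp only [hh, if_true]
        exact ⟨mul_nonneg (div_nonneg hm0.le hA0.le) (hF₁ h).1,
          mul_le_of_le_one_left (hF₁ h).1 ((div_le_one hA0).2 (min_le_left _ _))⟩
      · simp [hh, (hF₁ h).1]
    · intro h
      by_cases hh : H₂ h ∈ Wᶜ
      · simp only [hh, if_true]
        exact ⟨mul_nonneg (div_nonneg hm0.le hB0.le) (hF₂ h).1,
          mul_le_of_le_one_left (hF₂ h).1 ((div_le_one hB0).2 (min_le_right _ _))⟩
      · simp [hh, (hF₂ h).1]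
    · have : (∑ h, if H₁ h ∈ W then (m / A) * F₁ h else 0) = m := by
        rw [← Finset.sum_filter, ← Finset.mul_sum]
        have hfib : ∑ h ∈ Finset.univ.filter (fun h => H₁ h ∈ W), F₁ h = A := by
          exact (Finset.sum_fiberwise_eq_sum_filter Finset.univ W H₁ F₁).symm
        rw [hfib]
        exact div_mul_cancel₀ m hA0.ne'
      rw [this]; exact hmT
    · have : (∑ h, if H₂ h ∈ Wᶜ then (m / B) * F₂ h else 0) = m := by
        rw [← Finset.sum_filter, ← Finset.mul_sum]
        have hfib : ∑ h ∈ Finset.univ.filter (fun h => H₂ h ∈ Wᶜ), F₂ h = B := by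
          exact (Finset.sum_fiberwise_eq_sum_filter Finset.univ Wᶜ H₂ F₂).symm
        rw [hfib]
        exact div_mul_cancel₀ m hB0.ne'
      rw [this, hsum₂]; exact hmT
    · have h1 : (∑ h, if H₁ h ∈ W then (m / A) * F₁ h else 0) = m := by
        rw [← Finset.sum_filter, ← Finset.mul_sum]
        have hfib : ∑ h ∈ Finset.univ.filter (fun h => H₁ h ∈ W), F₁ h = A := by
          exact (Finset.sum_fiberwise_eq_sum_filter Finset.univ W H₁ F₁).symm
        rw [hfib]
        exact div_mul_cancel₀ m hA0.ne'
      have h2 : (∑ h, if H₂ h ∈ Wᶜ then (m / B) * F₂ h else 0) = m := by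
        rw [← Finset.sum_filter, ← Finset.mul_sum]
        have hfib : ∑ h ∈ Finset.univ.filter (fun h => H₂ h ∈ Wᶜ), F₂ h = B := by
          exact (Finset.sum_fiberwise_eq_sum_filter Finset.univ Wᶜ H₂ F₂).symm
        rw [hfib]
        exact div_mul_cancel₀ m hB0.ne'
      rw [h1, h2]
    · left
      intro h₁ h₂ hp1 hp2
      have h1 : H₁ h₁ ∈ W := by
        by_contra hh; simp [hh] at hp1
      have h2 : H₂ h₂ ∈ Wᶜ := by
        by_contra hh; simp [hh] at hp2
      intro heq
      rw [heq] at h1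
      exact (Finset.mem_compl.1 h2) h1
end
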